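/- Let A₁,…,Aₙ be real symmetric r×r matrices and M = x₀·I_r − (A₁x₁ + ⋯ + Aₙxₙ). Let h ∈ ℝ[x₀,…,xₙ] be irreducible with real zero set Zariski dense in its complex zero set. If h^m divides det(M) but h^{m+1} does not (m ≥ 1), then h^{m−1} divides every entry of the adjugate matrix adj(M), and some entry of adj(M) is not divisible by h^m. -/

import Mathlib

open MvPolynomial

/-!
Specialising `x₁, …, xₙ` to real values `s` turns `M` into the characteristic matrix
`x₀ I - B` of the real symmetric matrix `B = ∑ sₖ Aₖ`. Since `B` is diagonalisable, for an
eigenvalue `α` of multiplicity `μ` every entry of `adj (x₀ I - B)` is divisible by `(x₀ - α)^(μ-1)`.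
Now let `h ^ j * u = adj M i l` with `j + 2 ≤ m`, and let `(α, s)` be a real zero of `h` at which
`h(·, s) ≠ 0`. Then `α` is a root of `det M(·, s)` of multiplicity at least `m ν`, where `ν ≥ 1` is
its multiplicity in `h(·, s)`; comparing multiplicities in `h(·, s)^j u(·, s)` forces
`u(α, s) = 0`. Hence `u` times the `x₀`-leading coefficient of `h` vanishes on the real zeros of
`h`; by density and the Nullstellensatz, `h` divides it, and so `h ∣ u`. Iterating gives
`h^(m-1) ∣ adj M`. If `h^m` divided all of `adj M`, then `det (adj M) = (det M)^(r-1)` would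
force `h^(m+1) ∣ det M`.
-/

namespace Polynomial

variable {R : Type*} [CommRing R] [IsDomain R]

theorem pow_rootMultiplicity_sub_one_dvd_of_X_sub_C_mul_eq {p q : R[X]} (hp : p ≠ 0) {β : R}
    (hpq : (X - C β) * q = p) (α : R) : (X - C α) ^ (p.rootMultiplicity α - 1) ∣ q := by
  classical
  have hle : p.rootMultiplicity α - 1 ≤ q.rootMultiplicity α := by
    rw [← hpq, rootMultiplicity_mul (hpq ▸ hp), rootMultiplicity_X_sub_C]
    split_ifs <;> omega
  exact (pow_dvd_pow _ hle).trans (pow_rootMultiplicity_dvd q α)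

/-- If `α` is a root of multiplicity `μ ≥ 1` of `f`, it is a root of multiplicity at least `m μ`
of `p`, hence of multiplicity at least `(j + 2) μ - 1 > j μ` of `f ^ j * u`. -/
theorem isRoot_of_pow_rootMultiplicity_sub_one_dvd_pow_mul {f p u : R[X]} {α : R} {j m : ℕ}
    (hf : f ≠ 0) (hfα : f.IsRoot α) (hp : p ≠ 0) (hfp : f ^ m ∣ p) (hjm : j + 2 ≤ m)
    (hdvd : (X - C α) ^ (p.rootMultiplicity α - 1) ∣ f ^ j * u) : u.IsRoot α := by
  by_cases hu : u = 0
  · simp [hu]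
  classical
  have hμ : 0 < f.rootMultiplicity α := (rootMultiplicity_pos hf).mpr hfα
  have rootMultiplicity_pow (k : ℕ) :
      (f ^ k).rootMultiplicity α = k * f.rootMultiplicity α := by
    rw [← count_roots, roots_pow, Multiset.count_nsmul, count_roots]
  have hmp : m * f.rootMultiplicity α ≤ p.rootMultiplicity α := by
    rw [← rootMultiplicity_pow]
    exact rootMultiplicity_le_rootMultiplicity_of_dvd hp hfp α
  have hq : p.rootMultiplicity α ≤ j * f.rootMultiplicity α + u.rootMultiplicity α + 1 := by
    refine Nat.sub_le_iff_le_add.mp ?_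
    rw [← rootMultiplicity_pow, ← rootMultiplicity_mul (mul_ne_zero (pow_ne_zero _ hf) hu)]
    exact (le_rootMultiplicity_iff (mul_ne_zero (pow_ne_zero _ hf) hu)).mpr hdvd
  refine (rootMultiplicity_pos hu).mp ?_
  nlinarith [Nat.mul_le_mul_right (f.rootMultiplicity α) hjm]

end Polynomial

namespace Matrix

open scoped Polynomial

theorem IsSymm.sum_smul {R ι κ : Type*} [CommRing R] [Fintype κ] {A : κ → Matrix ι ι R}
    (hA : ∀ k, (A k).IsSymm) (s : κ → R) : (∑ k, s k • A k).IsSymm := by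
  simp [IsSymm, transpose_sum, fun k => (hA k).eq]

variable {R : Type*} [CommRing R] {ι : Type*} [Fintype ι] [DecidableEq ι]

theorem charmatrix_mul_mul_of_mul_eq_one {U V : Matrix ι ι R} (hUV : U * V = 1)
    (D : Matrix ι ι R) :
    charmatrix (U * D * V) = U.map Polynomial.C * charmatrix D * V.map Polynomial.C := by
  have hX : U.map Polynomial.C * scalar ι (Polynomial.X : R[X]) * V.map Polynomial.C =
      scalar ι Polynomial.X := by
    rw [← (scalar_commute Polynomial.X (fun _ => Polynomial.commute_X _) _).eq, mul_assoc,
      ← Matrix.map_mul, hUV, Matrix.map_one _ (map_zero _) (map_one _), mul_one]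
  rw [charmatrix, charmatrix, RingHom.mapMatrix_apply, RingHom.mapMatrix_apply, Matrix.map_mul,
    Matrix.map_mul, mul_sub, sub_mul, hX]

variable [IsDomain R]

theorem pow_rootMultiplicity_sub_one_dvd_adjugate_charmatrix_diagonal (d : ι → R) (α : R)
    (i j : ι) :
    (Polynomial.X - Polynomial.C α) ^ ((diagonal d).charpoly.rootMultiplicity α - 1) ∣
      (charmatrix (diagonal d)).adjugate i j := by
  rw [charmatrix_diagonal, adjugate_diagonal]
  by_cases hij : i = j
  · subst hij
    rw [diagonal_apply_eq]
    refine Polynomial.pow_rootMultiplicity_sub_one_dvd_of_X_sub_C_mul_eq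
      (charpoly_monic _).ne_zero (β := d i) ?_ α
    rw [charpoly_diagonal]
    exact Finset.mul_prod_erase _ (fun j => Polynomial.X - Polynomial.C (d j)) (Finset.mem_univ i)
  · rw [diagonal_apply_ne _ hij]
    exact dvd_zero _

theorem pow_rootMultiplicity_sub_one_dvd_adjugate_charmatrix_of_eq_mul_diagonal_mul
    {B U V : Matrix ι ι R} {d : ι → R} (hUV : U * V = 1) (hB : B = U * diagonal d * V) (α : R)
    (i j : ι) :
    (Polynomial.X - Polynomial.C α) ^ (B.charpoly.rootMultiplicity α - 1) ∣
      B.charmatrix.adjugate i j := by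
  have hchar : B.charpoly = (diagonal d).charpoly := by
    rw [hB, charpoly_mul_comm, ← mul_assoc, mul_eq_one_comm.mp hUV, one_mul]
  rw [hchar]
  subst hB
  rw [charmatrix_mul_mul_of_mul_eq_one hUV, adjugate_mul_distrib, adjugate_mul_distrib, mul_apply]
  refine Finset.dvd_sum fun l _ => dvd_mul_of_dvd_right ?_ _
  rw [mul_apply]
  exact Finset.dvd_sum fun k _ => dvd_mul_of_dvd_left
    (pow_rootMultiplicity_sub_one_dvd_adjugate_charmatrix_diagonal d α l k) _

theorem IsHermitian.pow_rootMultiplicity_sub_one_dvd_adjugate_charmatrix {𝕜 : Type*} [RCLike 𝕜]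
    {B : Matrix ι ι 𝕜} (hB : B.IsHermitian) (α : 𝕜) (i j : ι) :
    (Polynomial.X - Polynomial.C α) ^ (B.charpoly.rootMultiplicity α - 1) ∣
      B.charmatrix.adjugate i j := by
  refine pow_rootMultiplicity_sub_one_dvd_adjugate_charmatrix_of_eq_mul_diagonal_mul
    (d := RCLike.ofReal ∘ hB.eigenvalues) (Unitary.mul_star_self_of_mem hB.eigenvectorUnitary.2)
    ?_ α i j
  simpa using hB.spectral_theorem

theorem pow_succ_dvd_det_of_pow_dvd_adjugate {p : R} (hp : Prime p) {m : ℕ} (hm : m ≠ 0)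
    {M : Matrix ι ι R} (hdet : p ^ m ∣ M.det) (hadj : ∀ i j, p ^ m ∣ M.adjugate i j) :
    p ^ (m + 1) ∣ M.det := by
  choose N hN using hadj
  obtain ⟨g, hg⟩ := hdet
  have hdet_adj := congrArg det (show M.adjugate = p ^ m • of N by ext; simp [hN])
  rw [det_adjugate, det_smul, hg] at hdet_adj
  cases hcard : Fintype.card ι with
  | zero =>
    have := Fintype.card_eq_zero_iff.mp hcard
    rw [det_isEmpty] at hg
    exact absurd (isUnit_of_dvd_one ((dvd_pow_self p hm).trans ⟨g, hg⟩)) hp.not_isUnit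
  | succ k =>
    rw [hcard, Nat.add_sub_cancel, mul_pow, pow_succ, mul_assoc] at hdet_adj
    have hgk : g ^ k = p ^ m * (of N).det :=
      mul_left_cancel₀ (pow_ne_zero _ (pow_ne_zero _ hp.ne_zero)) hdet_adj
    obtain ⟨g', rfl⟩ := hp.dvd_of_dvd_pow (hgk ▸ dvd_mul_of_dvd_left (dvd_pow_self p hm) _)
    exact ⟨g', by rw [hg, pow_succ, mul_assoc]⟩

end Matrix

namespace MvPolynomial

variable {σ : Type*}

theorem dvd_of_map_ofReal_dvd_map_ofReal {p q : MvPolynomial σ ℝ} (hq : q ≠ 0)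
    (hdvd : map (algebraMap ℝ ℂ) q ∣ map (algebraMap ℝ ℂ) p) : q ∣ p := by
  obtain ⟨w, hw⟩ := hdvd
  have hconj (x : MvPolynomial σ ℝ) :
      map (starRingEnd ℂ) (map (algebraMap ℝ ℂ) x) = map (algebraMap ℝ ℂ) x := by
    rw [map_map, show (starRingEnd ℂ).comp (algebraMap ℝ ℂ) = algebraMap ℝ ℂ from
      RingHom.ext Complex.conj_ofReal]
  have hq' : map (algebraMap ℝ ℂ) q ≠ 0 :=
    (map_ne_zero_iff _ (map_injective _ (algebraMap ℝ ℂ).injective)).mpr hq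
  have hw_real : map (starRingEnd ℂ) w = w := by
    refine (mul_left_cancel₀ hq' ?_).symm
    rw [← hw, ← hconj, hw, _root_.map_mul, hconj]
  obtain ⟨w', rfl⟩ : w ∈ Set.range (map (algebraMap ℝ ℂ)) := by
    refine mem_range_map_iff_coeffs_subset.mpr fun c hc => ?_
    obtain ⟨s, -, rfl⟩ := mem_coeffs_iff.mp hc
    have hs := congrArg (coeff s) hw_real
    rw [coeff_map] at hs
    obtain ⟨r, hr⟩ := Complex.conj_eq_iff_real.mp hs
    exact ⟨r, hr.symm⟩
  exact ⟨w', map_injective _ (algebraMap ℝ ℂ).injective (by rw [hw, _root_.map_mul])⟩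

/-- The real zero set of `h` is Zariski dense in its complex zero set. -/
def RealZerosDense (h : MvPolynomial σ ℝ) : Prop :=
  ∀ z : σ → ℂ, aeval z h = 0 →
    ∀ q : MvPolynomial σ ℂ,
      (∀ a : σ → ℝ, eval a h = 0 → eval (fun i => (a i : ℂ)) q = 0) → eval z q = 0

theorem RealZerosDense.exists_dvd_pow [Finite σ] {h q : MvPolynomial σ ℝ}
    (hdense : RealZerosDense h) (hh : h ≠ 0) (hq : ∀ a : σ → ℝ, eval a h = 0 → eval a q = 0) :
    ∃ s, h ∣ q ^ s := by
  have hmem : map (algebraMap ℝ ℂ) q ∈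
      vanishingIdeal ℂ (zeroLocus ℂ (Ideal.span {map (algebraMap ℝ ℂ) h})) := by
    rw [mem_vanishingIdeal_iff]
    intro z hz
    refine hdense z ?_ _ fun a ha => ?_
    · simpa [zeroLocus_span, aeval_def, eval_map] using hz
    · rw [eval_map]
      exact (eval₂_comp_left (algebraMap ℝ ℂ) (RingHom.id ℝ) a q).symm.trans
        (by rw [← coe_eval₂Hom, ← eval, hq a ha, map_zero])
  rw [vanishingIdeal_zeroLocus_eq_radical] at hmem
  obtain ⟨s, hs⟩ := Ideal.mem_radical_iff.mp hmem
  rw [Ideal.mem_span_singleton, ← map_pow] at hs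
  exact ⟨s, dvd_of_map_ofReal_dvd_map_ofReal hh hs⟩

end MvPolynomial

section Pencil

variable {R : Type*} [CommRing R] {n r : ℕ}

noncomputable def specializeTail (s : Fin n → R) :
    MvPolynomial (Fin (n + 1)) R →+* Polynomial R :=
  (Polynomial.mapRingHom (eval s)).comp (finSuccEquiv R n : MvPolynomial (Fin (n + 1)) R →+* _)

theorem specializeTail_apply (s : Fin n → R) (f : MvPolynomial (Fin (n + 1)) R) :
    specializeTail s f = Polynomial.map (eval s) (finSuccEquiv R n f) :=
  rfl

theorem eval_specializeTail (s : Fin n → R) (x : R) (f : MvPolynomial (Fin (n + 1)) R) :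
    (specializeTail s f).eval x = eval (Fin.cons x s) f :=
  (eval_eq_eval_mv_eval' s x f).symm

theorem specializeTail_finSuccEquiv_symm_C (s : Fin n → R) (c : MvPolynomial (Fin n) R) :
    specializeTail s ((finSuccEquiv R n).symm (Polynomial.C c)) = Polynomial.C (eval s c) := by
  simp [specializeTail_apply]

theorem specializeTail_ne_zero {s : Fin n → R} {f : MvPolynomial (Fin (n + 1)) R}
    (hs : eval s (finSuccEquiv R n f).leadingCoeff ≠ 0) : specializeTail s f ≠ 0 := fun hf => by
  have := congrArg (Polynomial.coeff · (finSuccEquiv R n f).natDegree) hf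
  simp only [specializeTail_apply, Polynomial.coeff_map, Polynomial.coeff_zero] at this
  exact hs this

noncomputable def monicPencil (A : Fin n → Matrix (Fin r) (Fin r) R) :
    Matrix (Fin r) (Fin r) (MvPolynomial (Fin (n + 1)) R) :=
  Matrix.of fun i j => (if i = j then X 0 else 0) - ∑ k : Fin n, C (A k i j) * X k.succ

noncomputable def linearPencil (A : Fin n → Matrix (Fin r) (Fin r) R) :
    Matrix (Fin r) (Fin r) (MvPolynomial (Fin n) R) :=
  Matrix.of fun i j => ∑ k : Fin n, C (A k i j) * X k

theorem map_finSuccEquiv_monicPencil (A : Fin n → Matrix (Fin r) (Fin r) R) :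
    (monicPencil A).map (finSuccEquiv R n) = (linearPencil A).charmatrix := by
  have hC (a : R) : finSuccEquiv R n (C a) = Polynomial.C (C a) := by
    simp [finSuccEquiv_apply]
  ext i j : 1
  by_cases hij : i = j
  · subst hij
    simp [monicPencil, linearPencil, Matrix.charmatrix_apply_eq, finSuccEquiv_X_zero,
      finSuccEquiv_X_succ, hC]
  · simp [monicPencil, linearPencil, hij, finSuccEquiv_X_succ, hC]

theorem finSuccEquiv_det_monicPencil (A : Fin n → Matrix (Fin r) (Fin r) R) :
    finSuccEquiv R n (monicPencil A).det = (linearPencil A).charpoly := by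
  rw [← AlgEquiv.coe_ringEquiv, RingEquiv.map_det]
  exact congrArg Matrix.det (map_finSuccEquiv_monicPencil A)

theorem map_specializeTail_monicPencil (A : Fin n → Matrix (Fin r) (Fin r) R) (s : Fin n → R) :
    (monicPencil A).map (specializeTail s) = (∑ k, s k • A k).charmatrix := by
  have hlin : (linearPencil A).map (eval s) = ∑ k, s k • A k := by
    ext i j
    simp [linearPencil, Matrix.sum_apply, mul_comm]
  rw [← hlin, Matrix.charmatrix_map, ← map_finSuccEquiv_monicPencil, Matrix.map_map]
  rfl

theorem natDegree_finSuccEquiv_pos_of_dvd_det_monicPencil [Nontrivial R]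
    {A : Fin n → Matrix (Fin r) (Fin r) R} {h : MvPolynomial (Fin (n + 1)) R} (hh : ¬IsUnit h)
    (hdvd : h ∣ (monicPencil A).det) : 0 < (finSuccEquiv R n h).natDegree :=
  Polynomial.natDegree_pos_of_not_isUnit_of_dvd_monic (linearPencil A).charpoly_monic
    (by rwa [isUnit_map_iff]) (finSuccEquiv_det_monicPencil A ▸ map_dvd _ hdvd)

theorem not_dvd_finSuccEquiv_symm_C_leadingCoeff [IsDomain R] {h : MvPolynomial (Fin (n + 1)) R}
    (hpos : 0 < (finSuccEquiv R n h).natDegree) :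
    ¬ h ∣ (finSuccEquiv R n).symm (Polynomial.C (finSuccEquiv R n h).leadingCoeff) := fun hc => by
  have hle := Polynomial.natDegree_le_of_dvd (by simpa using map_dvd (finSuccEquiv R n) hc)
    (Polynomial.C_ne_zero.mpr (Polynomial.leadingCoeff_ne_zero.mpr
      (Polynomial.ne_zero_of_natDegree_gt hpos)))
  rw [Polynomial.natDegree_C] at hle
  omega

end Pencil

section SymmetricPencil

variable {n r m : ℕ} {A : Fin n → Matrix (Fin r) (Fin r) ℝ} {h : MvPolynomial (Fin (n + 1)) ℝ}

theorem eval_eq_zero_of_pow_mul_eq_adjugate_monicPencil (hA : ∀ k, (A k).IsSymm)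
    (hdvd : h ^ m ∣ (monicPencil A).det) {j : ℕ} (hjm : j + 2 ≤ m)
    {u : MvPolynomial (Fin (n + 1)) ℝ} {i l : Fin r} (hu : h ^ j * u = (monicPencil A).adjugate i l)
    {x : ℝ} {s : Fin n → ℝ} (hh : eval (Fin.cons x s) h = 0)
    (hs : eval s (finSuccEquiv ℝ n h).leadingCoeff ≠ 0) :
    eval (Fin.cons x s) u = 0 := by
  have hB : (∑ k, s k • A k).IsHermitian :=
    Matrix.isHermitian_iff_isSymm.mpr (Matrix.IsSymm.sum_smul hA s)
  have hdet : specializeTail s (monicPencil A).det = (∑ k, s k • A k).charpoly := by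
    rw [RingHom.map_det, RingHom.mapMatrix_apply, map_specializeTail_monicPencil]
    rfl
  have hadj : specializeTail s ((monicPencil A).adjugate i l) =
      (∑ k, s k • A k).charmatrix.adjugate i l := by
    rw [← map_specializeTail_monicPencil, ← RingHom.mapMatrix_apply, ← RingHom.map_adjugate]
    rfl
  rw [← eval_specializeTail]
  refine Polynomial.isRoot_of_pow_rootMultiplicity_sub_one_dvd_pow_mul
    (specializeTail_ne_zero hs) (by rwa [Polynomial.IsRoot, eval_specializeTail])
    (Matrix.charpoly_monic _).ne_zero (by simpa [hdet] using map_dvd (specializeTail s) hdvd) hjm ?_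
  rw [← map_pow, ← map_mul, hu, hadj]
  exact hB.pow_rootMultiplicity_sub_one_dvd_adjugate_charmatrix x i l

theorem dvd_of_pow_mul_eq_adjugate_monicPencil (hA : ∀ k, (A k).IsSymm) (hh : Irreducible h)
    (hdense : RealZerosDense h) (hdvd : h ^ m ∣ (monicPencil A).det) {j : ℕ} (hjm : j + 2 ≤ m)
    {u : MvPolynomial (Fin (n + 1)) ℝ} {i l : Fin r}
    (hu : h ^ j * u = (monicPencil A).adjugate i l) : h ∣ u := by
  -- the factor `c` discards the real zeros of `h` above which `h` loses degree in `x₀`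
  set c := (finSuccEquiv ℝ n).symm (Polynomial.C (finSuccEquiv ℝ n h).leadingCoeff)
  have hvan (a : Fin (n + 1) → ℝ) (ha : eval a h = 0) : eval a (u * c) = 0 := by
    rw [← Fin.cons_self_tail a] at ha ⊢
    rw [map_mul, ← eval_specializeTail _ _ c, specializeTail_finSuccEquiv_symm_C, Polynomial.eval_C]
    by_cases hs : eval (Fin.tail a) (finSuccEquiv ℝ n h).leadingCoeff = 0
    · rw [hs, mul_zero]
    · rw [eval_eq_zero_of_pow_mul_eq_adjugate_monicPencil hA hdvd hjm hu ha hs, zero_mul]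
  obtain ⟨k, hk⟩ := hdense.exists_dvd_pow hh.ne_zero hvan
  refine (hh.prime.dvd_or_dvd (hh.prime.dvd_of_dvd_pow hk)).resolve_right ?_
  exact not_dvd_finSuccEquiv_symm_C_leadingCoeff
    (natDegree_finSuccEquiv_pos_of_dvd_det_monicPencil (A := A) hh.not_isUnit
      ((dvd_pow_self h (by omega)).trans hdvd))

theorem pow_sub_one_dvd_adjugate_monicPencil (hA : ∀ k, (A k).IsSymm) (hh : Irreducible h)
    (hdense : RealZerosDense h) (hdvd : h ^ m ∣ (monicPencil A).det) (i l : Fin r) :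
    h ^ (m - 1) ∣ (monicPencil A).adjugate i l := by
  suffices ∀ j ≤ m - 1, h ^ j ∣ (monicPencil A).adjugate i l from this _ le_rfl
  intro j hj
  induction j with
  | zero => exact one_dvd _
  | succ j ih =>
    obtain ⟨u, hu⟩ := ih (by omega)
    obtain ⟨v, rfl⟩ := dvd_of_pow_mul_eq_adjugate_monicPencil hA hh hdense hdvd (by omega) hu.symm
    exact ⟨v, by rw [hu, pow_succ, mul_assoc]⟩

end SymmetricPencil

/-- if `h^m ∥ det M` then `h^(m-1)` divides every entry of `adj M`,
and some entry of `adj M` is not divisible by `h^m`. -/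
theorem stmt_3 (n r m : ℕ) (A : Fin n → Matrix (Fin r) (Fin r) ℝ)
    (hA : ∀ k, (A k).IsSymm)
    (M : Matrix (Fin r) (Fin r) (MvPolynomial (Fin (n + 1)) ℝ))
    (hM : M = Matrix.of fun i j =>
      (if i = j then (X 0 : MvPolynomial (Fin (n + 1)) ℝ) else 0)
        - ∑ k : Fin n, C (A k i j) * X k.succ)
    (h : MvPolynomial (Fin (n + 1)) ℝ) (hirr : Irreducible h)
    (hdense : ∀ z : Fin (n + 1) → ℂ, aeval z h = 0 →
      ∀ q : MvPolynomial (Fin (n + 1)) ℂ,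
        (∀ a : Fin (n + 1) → ℝ, eval a h = 0 → eval (fun i => (a i : ℂ)) q = 0) →
        eval z q = 0)
    (hm : 1 ≤ m) (hdvd : h ^ m ∣ M.det) (hndvd : ¬ h ^ (m + 1) ∣ M.det) :
    (∀ i j, h ^ (m - 1) ∣ M.adjugate i j) ∧
      ∃ i j, ¬ h ^ m ∣ M.adjugate i j := by
  obtain rfl : M = monicPencil A := hM
  refine ⟨pow_sub_one_dvd_adjugate_monicPencil hA hirr hdense hdvd, ?_⟩
  by_contra! hadj
  exact hndvd (Matrix.pow_succ_dvd_det_of_pow_dvd_adjugate hirr.prime (by omega) hdvd hadj)
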